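/- Let H be a Hopf algebra over a field k with bijective antipode, and let M be a left H-module and right H-comodule satisfying the generalized Yetter-Drinfeld condition of degree -i: ρ(hm) = h₍₂₎m₍₀₎ ⊗ h₍₃₎m₍₁₎S^{2i-1}(h₍₁₎). Then for every left H-module V, the map Φ : V ⊗ M → M ⊗ V defined by Φ(v ⊗ m) = m₍₀₎ ⊗ m₍₁₎v is a morphism of left H-modules, where V ⊗ M carries the action h·(v ⊗ m) = S^{2i}(h₍₁₎)v ⊗ h₍₂₎m (left factor twisted by S^{2i}) and M ⊗ V carries the diagonal action h·(m ⊗ v) = h₍₁₎m ⊗ h₍₂₎v. -/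

import Mathlib

open TensorProduct

noncomputable section

variable (k : Type) [Field k]
variable (H : Type) [Ring H] [HopfAlgebra k H]

/-- The action of `H` on a left `H`-module `M`, as a `k`-bilinear map. -/
def smulL (M : Type) [AddCommGroup M] [Module k M] [Module H M]
    [IsScalarTower k H M] [SMulCommClass k H M] : H →ₗ[k] M →ₗ[k] M where
  toFun h :=
    { toFun := fun m => h • m
      map_add' := fun _ _ => smul_add _ _ _
      map_smul' := fun c m => (smul_comm c h m).symm }
  map_add' := fun a b => LinearMap.ext fun m => add_smul a b m
  map_smul' := fun c a => LinearMap.ext fun m => smul_assoc c a m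

/-- The action of `H` on `M` as a linear map `H ⊗ M → M`. -/
def actM (M : Type) [AddCommGroup M] [Module k M] [Module H M]
    [IsScalarTower k H M] [SMulCommClass k H M] : H ⊗[k] M →ₗ[k] M :=
  TensorProduct.lift (smulL k H M)

/-- The diagonal action on a tensor product, built from two `k`-bilinear actions
via comultiplication: `h ↦ (x ⊗ y ↦ α(h₍₁₎)(x) ⊗ β(h₍₂₎)(y))`. -/
def diagAct {X Y : Type} [AddCommGroup X] [Module k X] [AddCommGroup Y] [Module k Y]
    (α : H →ₗ[k] X →ₗ[k] X) (β : H →ₗ[k] Y →ₗ[k] Y) :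
    H →ₗ[k] (X ⊗[k] Y →ₗ[k] X ⊗[k] Y) :=
  (TensorProduct.homTensorHomMap (R := k) (R₂ := k) (σ₁₂ := RingHom.id k) (M := X) (N := Y)
    (M₂ := X) (N₂ := Y)) ∘ₗ (TensorProduct.map α β) ∘ₗ
    (Coalgebra.comul (R := k) (A := H))

/-- Given `f : H ⊗ M → M ⊗ H` and `s : H → H`, the map
`h ⊗ m ↦ f(h₍₂₎ ⊗ m)₍M₎ ⊗ f(h₍₂₎ ⊗ m)₍H₎ * s(h₍₁₎)`
(in Sweedler notation, e.g. `(h₍₂₎m)₍₀₎ ⊗ (h₍₂₎m)₍₁₎ s(h₍₁₎)` when `f = ρ ∘ act`). -/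
def twistR {M : Type} [AddCommGroup M] [Module k M]
    (f : H ⊗[k] M →ₗ[k] M ⊗[k] H) (s : H →ₗ[k] H) : H ⊗[k] M →ₗ[k] M ⊗[k] H :=
  (LinearMap.lTensor M (LinearMap.mul' k H)) ∘ₗ
  (TensorProduct.assoc k M H H).toLinearMap ∘ₗ
  (TensorProduct.comm k H (M ⊗[k] H)).toLinearMap ∘ₗ
  (TensorProduct.map s f) ∘ₗ
  (TensorProduct.assoc k H H M).toLinearMap ∘ₗ
  (LinearMap.rTensor M (Coalgebra.comul (R := k) (A := H)))

/-- The map `h ⊗ m ↦ h₍₁₎·m₍₀₎ ⊗ h₍₂₎·m₍₁₎`. -/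
def ydR {M : Type} [AddCommGroup M] [Module k M]
    (act : H ⊗[k] M →ₗ[k] M) (ρ : M →ₗ[k] M ⊗[k] H) : H ⊗[k] M →ₗ[k] M ⊗[k] H :=
  (TensorProduct.map act (LinearMap.mul' k H)) ∘ₗ
  (TensorProduct.tensorTensorTensorComm k H H M H).toLinearMap ∘ₗ
  (TensorProduct.map (Coalgebra.comul (R := k) (A := H)) ρ)

/-- The map `Φ : V ⊗ M → M ⊗ V`, `v ⊗ m ↦ m₍₀₎ ⊗ m₍₁₎·v`. -/
def PhiMap {M V : Type} [AddCommGroup M] [Module k M] [AddCommGroup V] [Module k V]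
    (ρ : M →ₗ[k] M ⊗[k] H) (actV : H ⊗[k] V →ₗ[k] V) : V ⊗[k] M →ₗ[k] M ⊗[k] V :=
  (LinearMap.lTensor M actV) ∘ₗ
  (TensorProduct.assoc k M H V).toLinearMap ∘ₗ
  (LinearMap.rTensor V ρ) ∘ₗ
  (TensorProduct.comm k V M).toLinearMap

/-- The map `m ↦ s(m₍₁₎)·m₍₀₎`. -/
def stabMap {M : Type} [AddCommGroup M] [Module k M] [Module H M]
    [IsScalarTower k H M] [SMulCommClass k H M]
    (ρ : M →ₗ[k] M ⊗[k] H) (s : H →ₗ[k] H) : M →ₗ[k] M :=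
  (actM k H M) ∘ₗ (LinearMap.rTensor M s) ∘ₗ (TensorProduct.comm k M H).toLinearMap ∘ₗ ρ

/-- The map `M ⊗ V → M ⊗ V`, `m ⊗ v ↦ m₍₀₎ ⊗ s(m₍₁₎)·v`. -/
def tauZero {M V : Type} [AddCommGroup M] [Module k M] [AddCommGroup V] [Module k V]
    (ρ : M →ₗ[k] M ⊗[k] H) (actV : H ⊗[k] V →ₗ[k] V) (s : H →ₗ[k] H) :
    M ⊗[k] V →ₗ[k] M ⊗[k] V :=
  (LinearMap.lTensor M (actV ∘ₗ LinearMap.rTensor V s)) ∘ₗ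
  (TensorProduct.assoc k M H V).toLinearMap ∘ₗ
  (LinearMap.rTensor V ρ)

end

/-! Write `h·(v ⊗ m) = S^{2i}(h₍₁₎)v ⊗ h₍₂₎m` and apply the Yetter–Drinfeld condition to
`ρ(h₍₂₎m)`: the left side becomes `h₍₃₎m₍₀₎ ⊗ h₍₄₎m₍₁₎ S^{2i-1}(h₍₂₎) S^{2i}(h₍₁₎) v`.
Since `S^{2i-1}` is an anti-automorphism and `S^{2i} = S^{2i-1} ∘ S`, the product
`S^{2i-1}(h₍₂₎) S^{2i}(h₍₁₎)` is `S^{2i-1}(S(h₍₁₎) h₍₂₎)`, and `S(h₍₁₎) h₍₂₎ ⊗ h₍₃₎ = 1 ⊗ h`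
collapses the whole expression to `h₍₁₎m₍₀₎ ⊗ h₍₂₎m₍₁₎ v = h·Φ(v ⊗ m)`. -/

open Coalgebra HopfAlgebra

section Sweedler
variable {R A N : Type*} [CommSemiring R] [Semiring A] [HopfAlgebra R A]
  [AddCommMonoid N] [Module R N]

theorem rTensor_antipode_mul_comul_comul (a : A) :
    (LinearMap.mul' R A ∘ₗ (antipode R).rTensor A).rTensor A
      ((TensorProduct.assoc R A A A).symm ((comul (R := R)).lTensor A (comul a))) =
      1 ⊗ₜ a := by
  rw [coassoc_symm_apply, ← LinearMap.rTensor_comp_apply, LinearMap.comp_assoc,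
    mul_antipode_rTensor_comul, LinearMap.rTensor_comp_apply, rTensor_counit_comul]
  simp

variable {ι : Type*} {κ : ι → Type*}

theorem sum_sum_antipode_mul_tmul_eq {a : A} (r : Repr R a ι)
    (s : (i : ι) → Repr R (r.right i) (κ i)) :
    ∑ i ∈ r.index, ∑ j ∈ (s i).index, (antipode R (r.left i) * (s i).left j) ⊗ₜ[R] (s i).right j =
      1 ⊗ₜ a := by
  rw [← rTensor_antipode_mul_comul_comul, ← r.eq]
  simp only [map_sum, LinearMap.lTensor_tmul, ← (s _).eq, tmul_sum, assoc_symm_tmul,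
    LinearMap.rTensor_tmul, LinearMap.comp_apply, LinearMap.mul'_apply]

theorem sum_sum_antipode_mul_eq (B : A →ₗ[R] A →ₗ[R] N) {a : A} (r : Repr R a ι)
    (s : (i : ι) → Repr R (r.right i) (κ i)) :
    ∑ i ∈ r.index, ∑ j ∈ (s i).index, B (antipode R (r.left i) * (s i).left j) ((s i).right j) =
      B 1 a := by
  simpa [map_sum] using congr(TensorProduct.lift B $(sum_sum_antipode_mul_tmul_eq r s))

end Sweedler

namespace LinearEquiv
variable {R A : Type*} [CommSemiring R] [Semiring A] [Module R A]

theorem zpow_map_one (f : A ≃ₗ[R] A) (hf : f 1 = 1) (n : ℤ) : (f ^ n) 1 = 1 := by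
  have : f ∈ MulAction.stabilizer (A ≃ₗ[R] A) (1 : A) := hf
  exact zpow_mem this n

theorem mul_self_mul_map_mul_rev {f g : A ≃ₗ[R] A} (hf : ∀ a b, f (a * b) = f b * f a)
    (hg : ∀ a b, g (a * b) = g b * g a) (a b : A) :
    (f * f * g) (a * b) = (f * f * g) b * (f * f * g) a := by
  simp only [mul_apply, hg, hf]

theorem symm_map_mul_rev (f : A ≃ₗ[R] A) (hf : ∀ a b, f (a * b) = f b * f a)
    (a b : A) : f.symm (a * b) = f.symm b * f.symm a :=
  f.injective (by simp [hf])

theorem zpow_two_mul_sub_one_map_mul_rev (f : A ≃ₗ[R] A)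
    (hf : ∀ a b, f (a * b) = f b * f a) (n : ℤ) (a b : A) :
    (f ^ (2 * n - 1)) (a * b) = (f ^ (2 * n - 1)) b * (f ^ (2 * n - 1)) a := by
  induction n using Int.induction_on generalizing a b with
  | zero => simpa using f.symm_map_mul_rev hf a b
  | succ n ih =>
    rw [show 2 * (n + 1 : ℤ) - 1 = 1 + 1 + (2 * n - 1) by ring, zpow_add, zpow_add, zpow_one]
    exact mul_self_mul_map_mul_rev hf ih a b
  | pred n ih =>
    rw [show 2 * (-n - 1 : ℤ) - 1 = -1 + -1 + (2 * -n - 1) by ring, zpow_add, zpow_add,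
      zpow_neg_one]
    exact mul_self_mul_map_mul_rev (f.symm_map_mul_rev hf) ih a b

end LinearEquiv

section Actions
variable {k H : Type} [Field k] [Ring H] [HopfAlgebra k H]
  {X Y Z : Type} [AddCommGroup X] [Module k X] [AddCommGroup Y] [Module k Y]
  [AddCommGroup Z] [Module k Z]
  {N : Type} [AddCommGroup N] [Module k N] [Module H N] [IsScalarTower k H N]
  [SMulCommClass k H N]

@[simp]
theorem smulL_apply (h : H) (n : N) : smulL k H N h n = h • n :=
  rfl

@[simp]
theorem actM_tmul (h : H) (n : N) : actM k H N (h ⊗ₜ n) = h • n :=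
  rfl

theorem smulL_flip_comp_mulRight (a : H) (n : N) :
    (smulL k H N).flip n ∘ₗ LinearMap.mulRight k a = (smulL k H N).flip (a • n) := by
  ext b
  simp [mul_smul]

theorem lTensor_actM_assoc_tmul (z : X ⊗[k] H) (n : N) :
    (actM k H N).lTensor X (TensorProduct.assoc k X H N (z ⊗ₜ n)) =
      ((smulL k H N).flip n).lTensor X z := by
  induction z using TensorProduct.induction_on with
  | zero => simp
  | add z z' hz hz' => simp only [add_tmul, map_add, hz, hz']
  | tmul x c => simp

theorem PhiMap_tmul (ρ : X →ₗ[k] X ⊗[k] H) (n : N) (x : X) :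
    PhiMap k H ρ (actM k H N) (n ⊗ₜ x) = ((smulL k H N).flip n).lTensor X (ρ x) := by
  simp [PhiMap, lTensor_actM_assoc_tmul]

theorem diagAct_tmul_eq_sum (α : H →ₗ[k] X →ₗ[k] X) (β : H →ₗ[k] Y →ₗ[k] Y) {h : H}
    {ι : Type*} (r : Repr k h ι) (x : X) (y : Y) :
    diagAct k H α β h (x ⊗ₜ y) = ∑ i ∈ r.index, α (r.left i) x ⊗ₜ β (r.right i) y := by
  simp [diagAct, ← r.eq, map_sum]

theorem diagAct_lTensor (α : H →ₗ[k] X →ₗ[k] X) (β : H →ₗ[k] Y →ₗ[k] Y)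
    (γ : H →ₗ[k] Z →ₗ[k] Z) (φ : Y →ₗ[k] Z) (hφ : ∀ h, φ ∘ₗ β h = γ h ∘ₗ φ) (h : H)
    (z : X ⊗[k] Y) :
    diagAct k H α γ h (φ.lTensor X z) = φ.lTensor X (diagAct k H α β h z) := by
  simp only [diagAct, LinearMap.comp_apply]
  induction comul (R := k) h using TensorProduct.induction_on with
  | zero => simp
  | add w w' hw hw' => simp only [map_add, LinearMap.add_apply, hw, hw']
  | tmul a b =>
    simp only [map_tmul, homTensorHomMap_apply, ← LinearMap.comp_apply, LinearMap.lTensor,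
      ← map_comp, hφ, LinearMap.id_comp, LinearMap.comp_id]

theorem ydR_tmul (ρ : N →ₗ[k] N ⊗[k] H) (h : H) (n : N) :
    ydR k H (actM k H N) ρ (h ⊗ₜ n) = diagAct k H (smulL k H N) (LinearMap.mul k H) h (ρ n) := by
  simp only [ydR, diagAct, LinearMap.comp_apply, map_tmul, LinearEquiv.coe_coe]
  induction comul (R := k) h using TensorProduct.induction_on with
  | zero => simp
  | add w w' hw hw' => simp only [map_add, add_tmul, LinearMap.add_apply, hw, hw']
  | tmul a b =>
    induction ρ n using TensorProduct.induction_on with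
    | zero => simp
    | add z z' hz hz' => simp only [map_add, tmul_add, hz, hz']
    | tmul n c => simp

theorem lTensor_mul'_assoc_tmul (z : X ⊗[k] H) (c : H) :
    (LinearMap.mul' k H).lTensor X (TensorProduct.assoc k X H H (z ⊗ₜ c)) =
      (LinearMap.mulRight k c).lTensor X z := by
  induction z using TensorProduct.induction_on with
  | zero => simp
  | add z z' hz hz' => simp only [add_tmul, map_add, hz, hz']
  | tmul x d => simp

theorem twistR_tmul_eq_sum (f : H ⊗[k] X →ₗ[k] X ⊗[k] H) (s : H →ₗ[k] H) {h : H}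
    {ι : Type*} (r : Repr k h ι) (x : X) :
    twistR k H f s (h ⊗ₜ x) =
      ∑ i ∈ r.index, (LinearMap.mulRight k (s (r.left i))).lTensor X (f (r.right i ⊗ₜ x)) := by
  simp [twistR, ← r.eq, sum_tmul, map_sum, lTensor_mul'_assoc_tmul]

end Actions

section YetterDrinfeld
variable {k H : Type} [Field k] [Ring H] [HopfAlgebra k H]
  {M V : Type} [AddCommGroup M] [Module k M] [Module H M] [IsScalarTower k H M]
  [SMulCommClass k H M] [AddCommGroup V] [Module k V] [Module H V] [IsScalarTower k H V]
  [SMulCommClass k H V]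

theorem diagAct_PhiMap_tmul (ρ : M →ₗ[k] M ⊗[k] H) (h : H) (v : V) (m : M) :
    diagAct k H (smulL k H M) (smulL k H V) h (PhiMap k H ρ (actM k H V) (v ⊗ₜ m)) =
      ((smulL k H V).flip v).lTensor M (ydR k H (actM k H M) ρ (h ⊗ₜ m)) := by
  rw [PhiMap_tmul, ydR_tmul]
  exact diagAct_lTensor _ _ _ _ (fun a => by ext; simp [mul_smul]) h (ρ m)

theorem PhiMap_diagAct_tmul (S : H ≃ₗ[k] H) (hS : ∀ h : H, S h = antipode k h)
    (ρ : M →ₗ[k] M ⊗[k] H) (i : ℤ)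
    (hYD : ∀ (h : H) (m : M),
        ρ (h • m) =
          twistR k H (ydR k H (actM k H M) ρ) (S ^ (2 * i - 1)).toLinearMap (h ⊗ₜ[k] m))
    {h : H} {ι : Type*} {κ : ι → Type*} (r : Repr k h ι)
    (s : (j : ι) → Repr k (r.right j) (κ j)) (v : V) (m : M) :
    PhiMap k H ρ (actM k H V)
        (diagAct k H ((smulL k H V) ∘ₗ (S ^ (2 * i)).toLinearMap) (smulL k H M) h (v ⊗ₜ m)) =
      ∑ j ∈ r.index, ∑ l ∈ (s j).index,
        ((smulL k H V).flip ((S ^ (2 * i - 1)) (antipode k (r.left j) * (s j).left l) • v)).lTensor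
          M (ydR k H (actM k H M) ρ ((s j).right l ⊗ₜ m)) := by
  have hS_mul (a b : H) : S (a * b) = S b * S a := by
    simp only [hS, antipode_mul_antidistrib]
  have hSi (a : H) : (S ^ (2 * i)) a = (S ^ (2 * i - 1)) (antipode k a) := by
    rw [← hS, ← LinearEquiv.mul_apply, ← zpow_add_one, sub_add_cancel]
  rw [diagAct_tmul_eq_sum _ _ r, map_sum]
  refine Finset.sum_congr rfl fun j _ => ?_
  rw [LinearMap.comp_apply, LinearEquiv.coe_coe, smulL_apply, smulL_apply, PhiMap_tmul, hYD,
    twistR_tmul_eq_sum _ _ (s j), map_sum]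
  refine Finset.sum_congr rfl fun l _ => ?_
  rw [← LinearMap.lTensor_comp_apply]
  simp only [LinearEquiv.coe_coe, smulL_flip_comp_mulRight, smul_smul, hSi,
    S.zpow_two_mul_sub_one_map_mul_rev hS_mul]

end YetterDrinfeld

/-- if `M` satisfies the generalized YD condition of degree `-i`,
`ρ(hm) = h₍₂₎m₍₀₎ ⊗ h₍₃₎m₍₁₎ S^{2i-1}(h₍₁₎)`, then `Φ(v ⊗ m) = m₍₀₎ ⊗ m₍₁₎v` is `H`-linear
from `V^{S^{2i}} ⊗ M` (left factor twisted by `S^{2i}`) to `M ⊗ V` (diagonal action). -/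
theorem statement5
    (k : Type) [Field k] (H : Type) [Ring H] [HopfAlgebra k H]
    (S : H ≃ₗ[k] H) (hS : ∀ h : H, S h = HopfAlgebra.antipode (R := k) h)
    (M : Type) [AddCommGroup M] [Module k M] [Module H M]
    [IsScalarTower k H M] [SMulCommClass k H M]
    (ρ : M →ₗ[k] M ⊗[k] H) (i : ℤ)
    (hYD : ∀ (h : H) (m : M),
        ρ (h • m) =
          twistR k H (ydR k H (actM k H M) ρ) (S ^ (2 * i - 1)).toLinearMap (h ⊗ₜ[k] m))
    (V : Type) [AddCommGroup V] [Module k V] [Module H V]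
    [IsScalarTower k H V] [SMulCommClass k H V] :
    ∀ (h : H) (x : V ⊗[k] M),
      PhiMap k H ρ (actM k H V)
          (diagAct k H ((smulL k H V) ∘ₗ (S ^ (2 * i)).toLinearMap) (smulL k H M) h x) =
        diagAct k H (smulL k H M) (smulL k H V) h (PhiMap k H ρ (actM k H V) x) := by
  intro h x
  induction x using TensorProduct.induction_on with
  | zero => simp
  | add x y hx hy => simp only [map_add, hx, hy]
  | tmul v m =>
    -- `B a g = g₍₁₎m₍₀₎ ⊗ g₍₂₎m₍₁₎ S^{2i-1}(a) v`
    let B : H →ₗ[k] H →ₗ[k] M ⊗[k] V :=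
      (LinearMap.lTensorHom M ∘ₗ (smulL k H V).flip ∘ₗ (smulL k H V).flip v ∘ₗ
        (S ^ (2 * i - 1)).toLinearMap).compl₂
        (ydR k H (actM k H M) ρ ∘ₗ (TensorProduct.mk k H M).flip m)
    rw [PhiMap_diagAct_tmul S hS ρ i hYD (ℛ k h) (fun j => ℛ k _), diagAct_PhiMap_tmul]
    refine (sum_sum_antipode_mul_eq B _ _).trans ?_
    simp [B, LinearMap.coe_lTensorHom, S.zpow_map_one (by rw [hS, antipode_one])]
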